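/- arXiv:math/0609215 — 3 statements merged into one kernel-verified Lean document; each statement's English description precedes it below -/
import Mathlib

section
/- Let n ≥ 1, let θ = (θ₁,…,θₙ) ∈ ℝⁿ, and let u = diag(e^{iθ₁},…,e^{iθₙ}) ∈ U(n). Let V be the complex vector space of n×n complex matrices whose diagonal entries are all zero. The linear map T : V → V, T(X) = X − uXu⁻¹, is well defined (conjugation by a diagonal matrix preserves the diagonal entries), and |det T| = ∏_{1 ≤ j < k ≤ n} |e^{iθ_j} − e^{iθ_k}|². -/
open Matrix

/-- The complex vector space of `n×n` complex matrices with all diagonal entries zero. -/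
noncomputable def zeroDiag (n : ℕ) : Submodule ℂ (Matrix (Fin n) (Fin n) ℂ) where
  carrier := {X | ∀ i, X i i = 0}
  add_mem' := by
    intro X Y hX hY i
    simp [Matrix.add_apply, hX i, hY i]
  zero_mem' := by
    intro i
    rfl
  smul_mem' := by
    intro c X hX i
    simp [Matrix.smul_apply, hX i]

/-!
In the coordinates given by the off-diagonal entries, `X ↦ X - u X u⁻¹` is the diagonal map
multiplying the `(j, k)` entry by `1 - e^{iθⱼ} / e^{iθₖ}`, whose modulus is `|e^{iθⱼ} - e^{iθₖ}|`.
The determinant is the product of these over all `j ≠ k`, and pairing `(j, k)` with `(k, j)`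
gives the product of squares over `j < k`.
-/

theorem Finset.prod_ne_eq_prod_lt_sq {ι M : Type*} [Fintype ι] [LinearOrder ι] [CommMonoid M]
    {f : ι → ι → M} (hf : ∀ i j, f i j = f j i) :
    ∏ p : {p : ι × ι // p.1 ≠ p.2}, f p.1.1 p.1.2 =
      ∏ p ∈ univ.filter (fun p : ι × ι => p.1 < p.2), f p.1 p.2 ^ 2 := by
  have hswap : ∏ p ∈ univ.filter (fun p : ι × ι => p.2 < p.1), f p.1 p.2 =
      ∏ p ∈ univ.filter (fun p : ι × ι => p.1 < p.2), f p.1 p.2 :=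
    prod_equiv (Equiv.prodComm ι ι) (by simp) fun p _ => hf _ _
  have hsplit : univ.filter (fun p : ι × ι => p.1 ≠ p.2) =
      univ.filter (fun p : ι × ι => p.1 < p.2) ∪ univ.filter (fun p : ι × ι => p.2 < p.1) := by
    ext p
    simp only [mem_filter_univ, mem_union]
    exact ne_iff_lt_or_gt
  rw [← prod_subtype _ (fun p => mem_filter_univ p) (fun p : ι × ι => f p.1 p.2), hsplit,
    prod_union (disjoint_filter.mpr fun p _ h => lt_asymm h), hswap, ← prod_mul_distrib]
  simp_rw [sq]

theorem norm_one_sub_div_of_norm_eq_one {𝕜 : Type*} [NormedDivisionRing 𝕜] (a : 𝕜) {b : 𝕜}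
    (hb : ‖b‖ = 1) : ‖1 - a / b‖ = ‖a - b‖ := by
  have hb0 : b ≠ 0 := norm_ne_zero_iff.mp (hb ▸ one_ne_zero)
  rw [← div_self hb0, ← sub_div, norm_div, hb, div_one, norm_sub_rev]

theorem diagonal_mul_mul_inv_diagonal_apply {m K : Type*} [Fintype m] [DecidableEq m] [Field K]
    {d : m → K} (hd : ∀ i, d i ≠ 0) (X : Matrix m m K) (j k : m) :
    (diagonal d * X * (diagonal d)⁻¹) j k = d j * X j k / d k := by
  have hinv : (diagonal d)⁻¹ = diagonal d⁻¹ :=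
    inv_eq_right_inv <| by
      rw [diagonal_mul_diagonal, ← diagonal_one]
      exact congrArg diagonal (funext fun i => mul_inv_cancel₀ (hd i))
  rw [hinv, mul_diagonal, diagonal_mul, div_eq_mul_inv, Pi.inv_apply]

namespace zeroDiag

theorem mem_iff {n : ℕ} {X : Matrix (Fin n) (Fin n) ℂ} : X ∈ zeroDiag n ↔ ∀ i, X i i = 0 :=
  Iff.rfl

noncomputable def equivOffDiag (n : ℕ) :
    zeroDiag n ≃ₗ[ℂ] ({p : Fin n × Fin n // p.1 ≠ p.2} → ℂ) where
  toFun X p := (X : Matrix (Fin n) (Fin n) ℂ) p.1.1 p.1.2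
  map_add' _ _ := rfl
  map_smul' _ _ := rfl
  invFun f := ⟨of fun j k => if h : j = k then 0 else f ⟨(j, k), h⟩, fun i => by simp⟩
  left_inv X := by
    ext j k
    by_cases h : j = k
    · subst h
      simpa using (X.2 j).symm
    · simp [h]
  right_inv f := funext fun p => by simp [p.2]

theorem equivOffDiag_apply {n : ℕ} (X : zeroDiag n) (p : {p : Fin n × Fin n // p.1 ≠ p.2}) :
    equivOffDiag n X p = (X : Matrix (Fin n) (Fin n) ℂ) p.1.1 p.1.2 :=
  rfl

theorem equivOffDiag_symm_apply {n : ℕ} (f : {p : Fin n × Fin n // p.1 ≠ p.2} → ℂ)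
    (p : {p : Fin n × Fin n // p.1 ≠ p.2}) :
    ((equivOffDiag n).symm f : Matrix (Fin n) (Fin n) ℂ) p.1.1 p.1.2 = f p :=
  dif_neg p.2

theorem det_eq_prod_of_apply_eq_mul {n : ℕ} (T : zeroDiag n →ₗ[ℂ] zeroDiag n)
    (c : Fin n → Fin n → ℂ)
    (hT : ∀ (X : zeroDiag n) j k, j ≠ k →
      (T X : Matrix (Fin n) (Fin n) ℂ) j k = c j k * (X : Matrix (Fin n) (Fin n) ℂ) j k) :
    LinearMap.det T = ∏ p : {p : Fin n × Fin n // p.1 ≠ p.2}, c p.1.1 p.1.2 := by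
  have hdiag : (equivOffDiag n).toLinearMap ∘ₗ T ∘ₗ (equivOffDiag n).symm.toLinearMap =
      toLin' (diagonal fun p => c p.1.1 p.1.2) := by
    refine LinearMap.ext fun f => funext fun p => ?_
    simp only [LinearMap.comp_apply, LinearEquiv.coe_coe, equivOffDiag_apply, hT _ _ _ p.2,
      equivOffDiag_symm_apply, toLin'_apply, mulVec_diagonal]
  rw [← LinearMap.det_conj T (equivOffDiag n), hdiag, LinearMap.det_toLin', det_diagonal]

end zeroDiag

/-- **The Weyl-integration Jacobian for `U(n)` acting on itself by conjugation**: for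
`u = diag(e^{iθ₁},…,e^{iθₙ})`, the map `T X = X - u X u⁻¹` preserves the space `V` of matrices
with zero diagonal, and any linear map realizing it on `V` has
`|det T| = ∏_{j<k} |e^{iθⱼ} - e^{iθₖ}|²`. -/
theorem jacobian_conjugation_unitary (n : ℕ) (θ : Fin n → ℝ)
    (u : Matrix (Fin n) (Fin n) ℂ)
    (hu : u = Matrix.diagonal fun j => Complex.exp (θ j * Complex.I)) :
    (∀ X ∈ zeroDiag n, X - u * X * u⁻¹ ∈ zeroDiag n) ∧
    ∀ T : zeroDiag n →ₗ[ℂ] zeroDiag n,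
      (∀ X : zeroDiag n, (T X : Matrix (Fin n) (Fin n) ℂ)
          = (X : Matrix (Fin n) (Fin n) ℂ) - u * X * u⁻¹) →
      ‖LinearMap.det T‖ =
        ∏ p ∈ Finset.univ.filter (fun p : Fin n × Fin n => p.1 < p.2),
          ‖Complex.exp (θ p.1 * Complex.I) - Complex.exp (θ p.2 * Complex.I)‖ ^ 2 := by
  set d : Fin n → ℂ := fun j => Complex.exp (θ j * Complex.I)
  have hd : ∀ j, ‖d j‖ = 1 := fun j => Complex.norm_exp_ofReal_mul_I (θ j)
  have hconj : ∀ (X : Matrix (Fin n) (Fin n) ℂ) j k, (u * X * u⁻¹) j k = d j * X j k / d k := by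
    subst hu
    exact diagonal_mul_mul_inv_diagonal_apply fun j => Complex.exp_ne_zero _
  refine ⟨fun X hX => zeroDiag.mem_iff.mpr fun i => ?_, fun T hT => ?_⟩
  · rw [Matrix.sub_apply, hconj, zeroDiag.mem_iff.mp hX i]
    simp
  · have hTmul : ∀ (X : zeroDiag n) j k, j ≠ k → (T X : Matrix (Fin n) (Fin n) ℂ) j k =
        (1 - d j / d k) * (X : Matrix (Fin n) (Fin n) ℂ) j k :=
      fun X j k _ => by rw [hT, Matrix.sub_apply, hconj]; ring
    rw [zeroDiag.det_eq_prod_of_apply_eq_mul T _ hTmul, norm_prod]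
    simp_rw [norm_one_sub_div_of_norm_eq_one _ (hd _)]
    exact Finset.prod_ne_eq_prod_lt_sq (f := fun j k => ‖d j - d k‖) fun j k => norm_sub_rev _ _
end

section
/- Let U ⊆ ℝⁿ be an open set, let φ : U → ℝⁿ be continuously differentiable with det Dφ(x) ≠ 0 for every x ∈ U, and let k ≥ 1 be such that every point of V := φ(U) has exactly k preimages under φ in U. Then for every Lebesgue-integrable function f : ℝⁿ → ℝ one has ∫_V f(y) dy = (1/k) ∫_U f(φ(x)) · |det Dφ(x)| dx. -/
/-!
By the inverse function theorem `φ` is injective near every point of `U`, so (by second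
countability) `U` splits into countably many disjoint measurable pieces `Aᵢ` on each of which `φ`
is injective. On each piece the injective change of variables formula identifies the push-forward
of `|det Dφ| dx` on `Aᵢ` with Lebesgue measure on `φ(Aᵢ)`. Summing over `i`, a point `y ∈ φ(U)` is
counted once for every piece whose image contains it, that is once per preimage, hence `k` times:
the push-forward of `|det Dφ| dx` on `U` is `k` times Lebesgue measure on `φ(U)`.
-/

open MeasureTheory Set Filter Topology Function
open scoped ENNReal

theorem HasStrictFDerivAt.exists_mem_nhds_injOn_of_det_ne_zero {E : Type*}
    [NormedAddCommGroup E] [NormedSpace ℝ E] [FiniteDimensional ℝ E] {f : E → E}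
    {f' : E →L[ℝ] E} {a : E} (hf : HasStrictFDerivAt f f' a) (hdet : f'.det ≠ 0) :
    ∃ W ∈ 𝓝 a, InjOn f W := by
  rw [← f'.coe_toContinuousLinearEquivOfDetNeZero hdet] at hf
  exact ⟨_, (hf.toOpenPartialHomeomorph f).open_source.mem_nhds
    hf.mem_toOpenPartialHomeomorph_source, (hf.toOpenPartialHomeomorph f).injOn⟩

theorem exists_measurable_cover_injOn {α β : Type*} [TopologicalSpace α]
    [SecondCountableTopology α] [MeasurableSpace α] [OpensMeasurableSpace α] {φ : α → β}
    {U : Set α} (hU : MeasurableSet U) (hφ : ∀ x ∈ U, ∃ W ∈ 𝓝 x, InjOn φ W) :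
    ∃ B : ℕ → Set α, (∀ i, MeasurableSet (B i)) ∧ ⋃ i, B i = U ∧ ∀ i, InjOn φ (B i) := by
  rcases U.eq_empty_or_nonempty with rfl | hUne
  · exact ⟨fun _ ↦ ∅, fun _ ↦ .empty, iUnion_empty, fun _ ↦ injOn_empty φ⟩
  have hopen : ∀ x ∈ U, ∃ W, IsOpen W ∧ x ∈ W ∧ InjOn φ W := by
    intro x hx
    obtain ⟨W, hW, hinj⟩ := hφ x hx
    obtain ⟨V, hVW, hVo, hxV⟩ := mem_nhds_iff.1 hW
    exact ⟨V, hVo, hxV, hinj.mono hVW⟩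
  choose! W hWo hxW hWinj using hopen
  obtain ⟨t, htU, htc, hcover⟩ := TopologicalSpace.countable_cover_nhdsWithin
    (f := fun x ↦ U ∩ W x) fun x hx ↦
      inter_mem_nhdsWithin U ((hWo x hx).mem_nhds (hxW x hx))
  have htne : t.Nonempty := by
    obtain ⟨x, hx⟩ := hUne
    obtain ⟨c, hc, -⟩ := mem_iUnion₂.1 (hcover hx)
    exact ⟨c, hc⟩
  obtain ⟨c, rfl⟩ := htc.exists_eq_range htne
  refine ⟨fun i ↦ U ∩ W (c i), fun i ↦ hU.inter (hWo _ (htU ⟨i, rfl⟩)).measurableSet,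
    (iUnion_subset fun i ↦ inter_subset_left).antisymm ?_,
    fun i ↦ (hWinj _ (htU ⟨i, rfl⟩)).mono inter_subset_right⟩
  simpa only [biUnion_range] using hcover

theorem exists_measurable_partition_injOn {α β : Type*} [TopologicalSpace α]
    [SecondCountableTopology α] [MeasurableSpace α] [OpensMeasurableSpace α] {φ : α → β}
    {U : Set α} (hU : MeasurableSet U) (hφ : ∀ x ∈ U, ∃ W ∈ 𝓝 x, InjOn φ W) :
    ∃ A : ℕ → Set α, (∀ i, MeasurableSet (A i)) ∧ Pairwise (Disjoint on A) ∧
      ⋃ i, A i = U ∧ ∀ i, InjOn φ (A i) := by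
  obtain ⟨B, hBm, hBU, hBinj⟩ := exists_measurable_cover_injOn hU hφ
  exact ⟨disjointed B, .disjointed hBm, disjoint_disjointed B, by rw [iUnion_disjointed, hBU],
    fun i ↦ (hBinj i).mono (disjointed_subset B i)⟩

theorem encard_setOf_mem_image_eq_encard_fiber {ι α β : Type*} {A : ι → Set α} {φ : α → β}
    (hdisj : Pairwise (Disjoint on A)) (hinj : ∀ i, InjOn φ (A i)) (y : β) :
    {i | y ∈ φ '' A i}.encard = ((⋃ i, A i) ∩ φ ⁻¹' {y}).encard := by
  symm
  let index (x : ((⋃ i, A i) ∩ φ ⁻¹' {y} : Set α)) : {i | y ∈ φ '' A i} :=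
    ⟨(mem_iUnion.1 x.2.1).choose, x, (mem_iUnion.1 x.2.1).choose_spec, x.2.2⟩
  refine encard_congr (Equiv.ofBijective index ⟨fun x x' h ↦ ?_, fun ⟨i, x, hx, hxy⟩ ↦ ?_⟩)
  · have hi : (mem_iUnion.1 x.2.1).choose = (mem_iUnion.1 x'.2.1).choose :=
      congrArg Subtype.val h
    exact Subtype.ext <| hinj _ (mem_iUnion.1 x.2.1).choose_spec
      (hi ▸ (mem_iUnion.1 x'.2.1).choose_spec) (x.2.2.trans x'.2.2.symm)
  · refine ⟨⟨x, mem_iUnion_of_mem i hx, hxy⟩, Subtype.ext ?_⟩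
    by_contra hne
    exact (hdisj hne).le_bot ⟨(mem_iUnion.1 (mem_iUnion_of_mem i hx)).choose_spec, hx⟩

theorem tsum_indicator_one_eq_encard {ι α : Type*} (t : ι → Set α) (y : α) :
    ∑' i, (t i).indicator (1 : α → ℝ≥0∞) y = {i | y ∈ t i}.encard := by
  rw [← ENNReal.tsum_set_one, tsum_subtype {i | y ∈ t i} fun _ ↦ (1 : ℝ≥0∞)]
  rfl

theorem Measure.sum_restrict_eq_smul_restrict_iUnion {ι α : Type*} [Countable ι]
    [MeasurableSpace α] {μ : Measure α} {t : ι → Set α} (ht : ∀ i, MeasurableSet (t i))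
    {k : ℕ∞} (hk : ∀ y ∈ ⋃ i, t i, {i | y ∈ t i}.encard = k) :
    Measure.sum (fun i ↦ μ.restrict (t i)) = (k : ℝ≥0∞) • μ.restrict (⋃ i, t i) := by
  have hmult : ∑' i, (t i).indicator 1 = (⋃ i, t i).indicator fun _ ↦ (k : ℝ≥0∞) := by
    ext y
    rw [ENNReal.tsum_apply, tsum_indicator_one_eq_encard]
    by_cases hy : y ∈ ⋃ i, t i
    · rw [hk y hy, indicator_of_mem hy]
    · have hempty : {i | y ∈ t i} = ∅ := by simpa [eq_empty_iff_forall_notMem] using hy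
      simp [indicator_of_notMem hy, hempty]
  simp_rw [← withDensity_indicator_one (ht _)]
  rw [← withDensity_tsum fun i ↦ measurable_one.indicator (ht i), hmult,
    withDensity_indicator (.iUnion ht), withDensity_const]

theorem ContinuousOn.aemeasurable_withDensity {α β : Type*} [TopologicalSpace α]
    [MeasurableSpace α] [OpensMeasurableSpace α] [TopologicalSpace β] [MeasurableSpace β]
    [BorelSpace β] {φ : α → β} {U : Set α} {μ : Measure α} (hφ : ContinuousOn φ U)
    (hU : MeasurableSet U) (ρ : α → ℝ≥0∞) : AEMeasurable φ ((μ.restrict U).withDensity ρ) :=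
  (hφ.aemeasurable hU).mono_ac (withDensity_absolutelyContinuous _ _)

section ChangeOfVariables

variable {E : Type*} [NormedAddCommGroup E] [NormedSpace ℝ E] [FiniteDimensional ℝ E]
  [MeasurableSpace E] [BorelSpace E] (μ : Measure E) [μ.IsAddHaarMeasure] {φ : E → E}
  {φ' : E → E →L[ℝ] E} {U : Set E}

theorem map_withDensity_abs_det_fderiv_eq_smul_addHaar {k : ℕ∞} (hU : MeasurableSet U)
    (hφ' : ∀ x ∈ U, HasFDerivWithinAt φ (φ' x) U x) (hinj : ∀ x ∈ U, ∃ W ∈ 𝓝 x, InjOn φ W)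
    (hfib : ∀ y ∈ φ '' U, (U ∩ φ ⁻¹' {y}).encard = k) :
    Measure.map φ ((μ.restrict U).withDensity fun x ↦ ENNReal.ofReal |(φ' x).det|) =
      (k : ℝ≥0∞) • μ.restrict (φ '' U) := by
  have hφ := ContinuousOn.aemeasurable_withDensity (μ := μ)
    (fun x hx ↦ (hφ' x hx).continuousWithinAt) hU fun x ↦ ENNReal.ofReal |(φ' x).det|
  obtain ⟨A, hAm, hAdisj, rfl, hAinj⟩ := exists_measurable_partition_injOn hU hinj
  have hAφ' (i : ℕ) : ∀ x ∈ A i, HasFDerivWithinAt φ (φ' x) (A i) x := fun x hx ↦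
    (hφ' x (mem_iUnion_of_mem i hx)).mono (subset_iUnion A i)
  rw [Measure.restrict_iUnion hAdisj hAm, withDensity_sum] at hφ ⊢
  rw [Measure.map_sum hφ, image_iUnion]
  simp_rw [map_withDensity_abs_det_fderiv_eq_addHaar μ (hAm _).nullMeasurableSet (hAφ' _)
    (hAinj _)]
  refine Measure.sum_restrict_eq_smul_restrict_iUnion
    (fun i ↦ measurable_image_of_fderivWithin (hAm i) (hAφ' i) (hAinj i)) fun y hy ↦ ?_
  rw [encard_setOf_mem_image_eq_encard_fiber hAdisj hAinj, hfib y (image_iUnion ▸ hy)]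

theorem setIntegral_abs_det_fderiv_smul_eq_nsmul_integral_image {F : Type*}
    [NormedAddCommGroup F] [NormedSpace ℝ F] {k : ℕ} (hU : MeasurableSet U)
    (hφ' : ∀ x ∈ U, HasFDerivWithinAt φ (φ' x) U x) (hinj : ∀ x ∈ U, ∃ W ∈ 𝓝 x, InjOn φ W)
    (hfib : ∀ y ∈ φ '' U, (U ∩ φ ⁻¹' {y}).encard = k) {g : E → F}
    (hg : AEStronglyMeasurable g (μ.restrict (φ '' U))) :
    ∫ x in U, |(φ' x).det| • g (φ x) ∂μ = k • ∫ y in φ '' U, g y ∂μ := by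
  have hmap := map_withDensity_abs_det_fderiv_eq_smul_addHaar μ hU hφ' hinj hfib
  rw [ENat.toENNReal_coe] at hmap
  have hφ := ContinuousOn.aemeasurable_withDensity (μ := μ)
    (fun x hx ↦ (hφ' x hx).continuousWithinAt) hU fun x ↦ ENNReal.ofReal |(φ' x).det|
  have hgν : AEStronglyMeasurable g (Measure.map φ _) := hmap ▸ hg.smul_measure _
  calc ∫ x in U, |(φ' x).det| • g (φ x) ∂μ
      = ∫ x, g (φ x) ∂(μ.restrict U).withDensity fun x ↦ ENNReal.ofReal |(φ' x).det| := by
        rw [integral_withDensity_eq_integral_toReal_smul₀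
          (aemeasurable_ofReal_abs_det_fderivWithin μ hU hφ')
          (ae_of_all _ fun _ ↦ ENNReal.ofReal_lt_top)]
        simp only [ENNReal.toReal_ofReal (abs_nonneg _)]
    _ = k • ∫ y in φ '' U, g y ∂μ := by
        rw [← integral_map hφ hgν, hmap, integral_smul_measure, ENNReal.toReal_natCast,
          Nat.cast_smul_eq_nsmul]

end ChangeOfVariables

/-- **Multiplicity-`k` change of variables**: if `φ` is `C¹` on an open set `U ⊆ ℝⁿ` with
everywhere invertible derivative, and every point of `V = φ(U)` has exactly `k ≥ 1` preimages
in `U`, then for every Lebesgue-integrable `f`,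
`∫_V f(y) dy = (1/k) ∫_U f(φ x) |det Dφ(x)| dx`. -/
theorem integral_image_of_k_fold (n : ℕ) (U : Set (Fin n → ℝ)) (hU : IsOpen U)
    (φ : (Fin n → ℝ) → (Fin n → ℝ)) (hφ : ContDiffOn ℝ 1 φ U)
    (hdet : ∀ x ∈ U, LinearMap.det ((fderiv ℝ φ x) : (Fin n → ℝ) →ₗ[ℝ] (Fin n → ℝ)) ≠ 0)
    (k : ℕ) (hk : 1 ≤ k)
    (hfib : ∀ y ∈ φ '' U, Nat.card {x : Fin n → ℝ // x ∈ U ∧ φ x = y} = k)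
    (f : (Fin n → ℝ) → ℝ) (hf : Integrable f) :
    ∫ y in φ '' U, f y =
      (1 / (k : ℝ)) * ∫ x in U,
        f (φ x) * |LinearMap.det ((fderiv ℝ φ x) : (Fin n → ℝ) →ₗ[ℝ] (Fin n → ℝ))| := by
  have hstrict (x : Fin n → ℝ) (hx : x ∈ U) : HasStrictFDerivAt φ (fderiv ℝ φ x) x :=
    (hφ.contDiffAt (hU.mem_nhds hx)).hasStrictFDerivAt one_ne_zero
  -- `Nat.card` of an infinite type is `0`, so `1 ≤ k` is what makes the fibres finite.
  have hfib' (y : Fin n → ℝ) (hy : y ∈ φ '' U) : (U ∩ φ ⁻¹' {y}).encard = k := by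
    have hcard : (U ∩ φ ⁻¹' {y}).ncard = k := hfib y hy
    rw [← hcard, (finite_of_ncard_ne_zero (by omega)).cast_ncard_eq]
  have hpush := setIntegral_abs_det_fderiv_smul_eq_nsmul_integral_image volume
    hU.measurableSet (fun x hx ↦ (hstrict x hx).hasFDerivAt.hasFDerivWithinAt)
    (fun x hx ↦ (hstrict x hx).exists_mem_nhds_injOn_of_det_ne_zero (hdet x hx)) hfib'
    hf.aestronglyMeasurable.restrict
  have hk0 : (k : ℝ) ≠ 0 := Nat.cast_ne_zero.2 (by omega)
  field_simp
  simpa [mul_comm] using hpush.symm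
end

section
/- Let n ≥ 1, let T ≤ U(n) be the subgroup of diagonal unitary matrices, and let U(n)/T denote the set of left cosets of T. For every u ∈ U(n) whose n eigenvalues are pairwise distinct, the set { (gT, t) ∈ (U(n)/T) × T : g t g⁻¹ = u } has exactly n! elements (note that g t g⁻¹ is independent of the representative g of the coset gT). -/
/-!
If `t ∈ T` is conjugate to `u`, its diagonal entries are the eigenvalues of `u`, hence distinct,
so every matrix commuting with `t` is diagonal: the centralizer of `t` is `T`. Consequently
`(gT, t) ↦ t` identifies the fiber over `u` with the set of `t ∈ T` conjugate to `u`.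
Eigenvectors of a unitary matrix for distinct eigenvalues are orthogonal, so `u` is conjugate in
`U(n)` to a diagonal matrix `diag(d)` with `d` injective; conjugating by permutation matrices and
comparing characteristic polynomials shows that the elements of `T` conjugate to `u` are exactly
the `diag(d ∘ σ)` for `σ ∈ Sₙ`, and these are pairwise distinct.
-/

open Matrix

/-- The maximal torus of diagonal matrices in the unitary group `U(n)`. -/
noncomputable def diagTorus (n : ℕ) : Subgroup (Matrix.unitaryGroup (Fin n) ℂ) where
  carrier := {u | ((u : Matrix (Fin n) (Fin n) ℂ)).IsDiag}
  one_mem' := by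
    show ((1 : Matrix.unitaryGroup (Fin n) ℂ) : Matrix (Fin n) (Fin n) ℂ).IsDiag
    rw [show ((1 : Matrix.unitaryGroup (Fin n) ℂ) : Matrix (Fin n) (Fin n) ℂ)
        = (1 : Matrix (Fin n) (Fin n) ℂ) from rfl]
    exact Matrix.isDiag_one
  mul_mem' := by
    intro a b ha hb
    intro i j hij
    rw [show ((a * b : Matrix.unitaryGroup (Fin n) ℂ) : Matrix (Fin n) (Fin n) ℂ)
        = (a : Matrix (Fin n) (Fin n) ℂ) * (b : Matrix (Fin n) (Fin n) ℂ) from rfl]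
    rw [Matrix.mul_apply]
    refine Finset.sum_eq_zero fun k _ => ?_
    rcases eq_or_ne k i with rfl | hk
    · rw [hb hij, mul_zero]
    · rw [ha (Ne.symm hk), zero_mul]
  inv_mem' := by
    intro a ha
    show ((a⁻¹ : Matrix.unitaryGroup (Fin n) ℂ) : Matrix (Fin n) (Fin n) ℂ).IsDiag
    rw [← Unitary.star_eq_inv, Unitary.coe_star, Matrix.star_eq_conjTranspose]
    exact Matrix.IsDiag.conjTranspose ha

section ConjFiber

variable {G : Type*} [Group G]

def conjFiber (H : Subgroup G) (u : G) : Set ((G ⧸ H) × H) :=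
  {p | ∃ g : G, (g : G ⧸ H) = p.1 ∧ g * p.2 * g⁻¹ = u}

/-- Two points `(gH, t)`, `(g'H, t)` of the fiber differ by `g'⁻¹ g`, which centralizes `t`. -/
theorem card_conjFiber_eq_card_isConj (H : Subgroup G) (u : G)
    (hreg : ∀ t : H, IsConj (t : G) u → ∀ g : G, Commute g t → g ∈ H) :
    Nat.card (conjFiber H u) = Nat.card {t : H // IsConj (t : G) u} := by
  refine Nat.card_congr (Equiv.ofBijective
    (fun p => ⟨p.1.2, by obtain ⟨g, -, hg⟩ := p.2; exact isConj_iff.mpr ⟨g, hg⟩⟩)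
    ⟨?_, ?_⟩)
  · rintro ⟨⟨x, t⟩, g, hgx, hg⟩ ⟨⟨y, s⟩, h, hhy, hh⟩ hts
    obtain rfl : t = s := congrArg Subtype.val hts
    dsimp only at hgx hg hhy hh
    subst hgx hhy
    have hcomm : Commute (h⁻¹ * g) t := by
      rw [← hh] at hg
      calc h⁻¹ * g * t = h⁻¹ * (g * t * g⁻¹) * g := by group
        _ = t * (h⁻¹ * g) := by rw [hg]; group
    have hmem := hreg t (isConj_iff.mpr ⟨h, hh⟩) _ hcomm
    ext : 2
    · exact (QuotientGroup.eq.mpr (by simpa using hmem)).symm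
    · rfl
  · rintro ⟨t, ht⟩
    obtain ⟨g, hg⟩ := isConj_iff.mp ht
    exact ⟨⟨((g : G ⧸ H), t), g, rfl, hg⟩, rfl⟩

end ConjFiber

theorem exists_perm_eq_comp_of_map_univ_eq {α β : Type*} [Fintype α] {f g : α → β}
    (hg : Function.Injective g) (h : Finset.univ.val.map f = Finset.univ.val.map g) :
    ∃ σ : Equiv.Perm α, f = g ∘ σ := by
  have hf : Function.Injective f :=
    Fintype.nodup_map_univ_iff_injective.mp (h ▸ Fintype.nodup_map_univ_iff_injective.mpr hg)
  choose σ hσ using fun a => Multiset.mem_map.mp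
    (h ▸ Multiset.mem_map_of_mem f (Finset.mem_univ a) : f a ∈ Finset.univ.val.map g)
  have hσ_inj : Function.Injective σ := fun a b hab =>
    hf (by rw [← (hσ a).2, ← (hσ b).2, hab])
  exact ⟨Equiv.ofBijective σ hσ_inj.bijective_of_finite, funext fun a => (hσ a).2.symm⟩

namespace Matrix

variable {m R : Type*} [Fintype m] [DecidableEq m]

theorem isDiag_of_commute_diagonal [CommRing R] [NoZeroDivisors R] {d : m → R}
    (hd : Function.Injective d) {M : Matrix m m R} (h : Commute M (diagonal d)) : M.IsDiag := by
  intro i j hij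
  have hMd : M i j * (d j - d i) = 0 := by
    rw [mul_sub, ← mul_diagonal, h.eq, diagonal_mul, mul_comm, sub_self]
  exact (mul_eq_zero.mp hMd).resolve_right (sub_ne_zero.mpr (hd.ne (Ne.symm hij)))

open Polynomial in
theorem roots_charpoly_diagonal [CommRing R] [IsDomain R] (d : m → R) :
    (diagonal d).charpoly.roots = Finset.univ.val.map d := by
  rw [charpoly_diagonal, Finset.prod_eq_multiset_prod,
    ← roots_multiset_prod_X_sub_C (Finset.univ.val.map d), Multiset.map_map]
  rfl

theorem charpoly_eq_of_isConj [CommRing R] {A B : Matrix m m R} (h : IsConj A B) :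
    A.charpoly = B.charpoly := by
  obtain ⟨c, hc⟩ := h
  rw [← charpoly_units_conj c A, ← coe_units_inv, (Units.mul_inv_eq_iff_eq_mul c).mpr hc.eq]

theorem UnitaryGroup.charpoly_eq_of_isConj [CommRing R] [StarRing R] {a b : unitaryGroup m R}
    (h : IsConj a b) : (a : Matrix m m R).charpoly = (b : Matrix m m R).charpoly :=
  Matrix.charpoly_eq_of_isConj ((unitaryGroup m R).subtype.map_isConj h)

theorem permMatrix_mem_unitaryGroup [CommRing R] [StarRing R] (σ : Equiv.Perm m) :
    σ.permMatrix R ∈ unitaryGroup m R := by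
  rw [mem_unitaryGroup_iff, star_eq_conjTranspose, conjTranspose_permMatrix, ← permMatrix_mul,
    inv_mul_cancel, permMatrix_one]

theorem permMatrix_mul_diagonal_mul_permMatrix_inv [CommRing R] (σ : Equiv.Perm m) (d : m → R) :
    σ.permMatrix R * diagonal d * σ⁻¹.permMatrix R = diagonal (d ∘ σ) := by
  rw [Equiv.Perm.permMatrix, Equiv.Perm.permMatrix, PEquiv.toMatrix_toPEquiv_mul,
    PEquiv.mul_toMatrix_toPEquiv, Equiv.Perm.inv_def, Equiv.symm_symm, submatrix_submatrix,
    Function.id_comp, Function.comp_id, submatrix_diagonal_equiv]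

section Unitary

open scoped ComplexOrder

variable {𝕜 : Type*} [RCLike 𝕜] {A : Matrix m m 𝕜}

theorem star_mulVec_dotProduct_mulVec (hA : A ∈ unitaryGroup m 𝕜) (v w : m → 𝕜) :
    star (A *ᵥ v) ⬝ᵥ (A *ᵥ w) = star v ⬝ᵥ w := by
  rw [star_mulVec, dotProduct_mulVec, vecMul_vecMul, ← star_eq_conjTranspose,
    (mem_unitaryGroup_iff').mp hA, vecMul_one]

theorem star_mul_mul_dotProduct_of_mulVec_eq_smul (hA : A ∈ unitaryGroup m 𝕜) {μ ν : 𝕜}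
    {v w : m → 𝕜} (hv : A *ᵥ v = μ • v) (hw : A *ᵥ w = ν • w) :
    star μ * ν * (star v ⬝ᵥ w) = star v ⬝ᵥ w := by
  have h := star_mulVec_dotProduct_mulVec hA v w
  rwa [hv, hw, star_smul, smul_dotProduct, dotProduct_smul, smul_eq_mul, smul_eq_mul,
    ← mul_assoc] at h

theorem star_mul_self_eq_one_of_mulVec_eq_smul (hA : A ∈ unitaryGroup m 𝕜) {μ : 𝕜}
    {v : m → 𝕜} (hv0 : v ≠ 0) (hv : A *ᵥ v = μ • v) : star μ * μ = 1 :=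
  mul_eq_right₀ (dotProduct_star_self_eq_zero.not.mpr hv0) |>.mp
    (star_mul_mul_dotProduct_of_mulVec_eq_smul hA hv hv)

theorem star_dotProduct_eq_zero_of_mulVec_eq_smul (hA : A ∈ unitaryGroup m 𝕜) {μ ν : 𝕜}
    {v w : m → 𝕜} (hv0 : v ≠ 0) (hv : A *ᵥ v = μ • v) (hw : A *ᵥ w = ν • w)
    (hμν : μ ≠ ν) :
    star v ⬝ᵥ w = 0 := by
  by_contra hvw
  have hμ := star_mul_self_eq_one_of_mulVec_eq_smul hA hv0 hv
  have hμν' := (mul_eq_right₀ hvw).mp (star_mul_mul_dotProduct_of_mulVec_eq_smul hA hv hw)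
  exact hμν (mul_left_cancel₀ (left_ne_zero_of_mul_eq_one hμ) (hμ.trans hμν'.symm))

theorem exists_mulVec_eq_smul_of_isRoot_charpoly {μ : 𝕜} (h : A.charpoly.IsRoot μ) :
    ∃ v : m → 𝕜, star v ⬝ᵥ v = 1 ∧ A *ᵥ v = μ • v := by
  obtain ⟨w, hw⟩ := ((Module.End.hasEigenvalue_iff_isRoot_charpoly (toLin' A) μ).mpr
    (by rwa [charpoly_toLin'])).exists_hasEigenvector
  have hw0 : ‖WithLp.toLp 2 w‖ ≠ 0 := by simpa using hw.2
  refine ⟨(‖WithLp.toLp 2 w‖⁻¹ : 𝕜) • w, ?_, ?_⟩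
  · rw [star_smul, smul_dotProduct, dotProduct_smul, dotProduct_comm,
      ← EuclideanSpace.inner_toLp_toLp, inner_self_eq_norm_sq_to_K]
    simp only [star_inv₀, RCLike.star_def, RCLike.conj_ofReal, smul_eq_mul]
    field_simp
  · rw [mulVec_smul, ← toLin'_apply, hw.apply_eq_smul, smul_comm]

theorem transpose_of_mem_unitaryGroup {v : m → m → 𝕜}
    (hv : ∀ i j, star (v i) ⬝ᵥ v j = (1 : Matrix m m 𝕜) i j) :
    (of v)ᵀ ∈ unitaryGroup m 𝕜 := by
  rw [mem_unitaryGroup_iff']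
  ext i j
  rw [← hv, mul_apply, dotProduct]
  rfl

theorem mul_transpose_of_eq_transpose_of_mul_diagonal {v : m → m → 𝕜} {d : m → 𝕜}
    (hv : ∀ j, A *ᵥ v j = d j • v j) :
    A * (of v)ᵀ = (of v)ᵀ * diagonal d := by
  ext i j
  calc (A * (of v)ᵀ) i j = (A *ᵥ v j) i := rfl
    _ = ((of v)ᵀ * diagonal d) i j := by rw [hv, mul_diagonal]; exact mul_comm _ _

theorem UnitaryGroup.exists_mul_eq_mul_diagonal (u : unitaryGroup m ℂ)
    (hu : (u : Matrix m m ℂ).charpoly.roots.Nodup) :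
    ∃ (g : unitaryGroup m ℂ) (d : m → ℂ), (u : Matrix m m ℂ) * g = g * diagonal d := by
  set s := (u : Matrix m m ℂ).charpoly.roots.toFinset
  have hs : s.card = Fintype.card m := by
    rw [Multiset.toFinset_card_of_nodup hu, IsAlgClosed.card_roots_eq_natDegree,
      charpoly_natDegree_eq_dim]
  let e : m ≃ s := Fintype.equivOfCardEq (by rw [Fintype.card_coe, hs])
  have hroot (i : m) : (u : Matrix m m ℂ).charpoly.IsRoot (e i) :=
    Polynomial.isRoot_of_mem_roots (Multiset.mem_toFinset.mp (e i).2)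
  choose v hv_unit hv using fun i => exists_mulVec_eq_smul_of_isRoot_charpoly (hroot i)
  have hv_orth (i j : m) : star (v i) ⬝ᵥ v j = (1 : Matrix m m ℂ) i j := by
    rcases eq_or_ne i j with rfl | hij
    · rw [hv_unit, one_apply_eq]
    · have hv0 : v i ≠ 0 := fun h => by simpa [h] using hv_unit i
      rw [one_apply_ne hij]
      exact star_dotProduct_eq_zero_of_mulVec_eq_smul u.2 hv0 (hv i) (hv j)
        (Subtype.val_injective.ne (e.injective.ne hij))
  exact ⟨⟨_, transpose_of_mem_unitaryGroup hv_orth⟩, _,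
    mul_transpose_of_eq_transpose_of_mul_diagonal hv⟩

end Unitary

def permUnitary [CommRing R] [StarRing R] (σ : Equiv.Perm m) : unitaryGroup m R :=
  ⟨σ.permMatrix R, permMatrix_mem_unitaryGroup σ⟩

theorem coe_permUnitary_mul_mul_inv [CommRing R] [StarRing R] (σ : Equiv.Perm m)
    {t : unitaryGroup m R} {d : m → R} (ht : (t : Matrix m m R) = diagonal d) :
    ((permUnitary σ * t * (permUnitary σ)⁻¹ : unitaryGroup m R) : Matrix m m R) =
      diagonal (d ∘ σ) := by
  rw [UnitaryGroup.mul_val, UnitaryGroup.mul_val, UnitaryGroup.inv_val, ht, permUnitary,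
    star_eq_conjTranspose, conjTranspose_permMatrix, permMatrix_mul_diagonal_mul_permMatrix_inv]

end Matrix

section DiagTorus

local notation "U(" n ")" => Matrix.unitaryGroup (Fin n) ℂ

variable {n : ℕ}

theorem mem_diagTorus_iff {g : U(n)} :
    g ∈ diagTorus n ↔ (g : Matrix (Fin n) (Fin n) ℂ).IsDiag :=
  Iff.rfl

theorem roots_charpoly_of_mem_diagTorus (t : diagTorus n) :
    (t : Matrix (Fin n) (Fin n) ℂ).charpoly.roots =
      Finset.univ.val.map (t : Matrix (Fin n) (Fin n) ℂ).diag := by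
  conv_lhs => rw [← (mem_diagTorus_iff.mp t.2).diagonal_diag]
  exact roots_charpoly_diagonal _

theorem injective_diag_of_isConj {u : U(n)}
    (hu : (u : Matrix (Fin n) (Fin n) ℂ).charpoly.roots.Nodup) {t : diagTorus n}
    (ht : IsConj (t : U(n)) u) :
    Function.Injective (t : Matrix (Fin n) (Fin n) ℂ).diag := by
  rwa [← Fintype.nodup_map_univ_iff_injective, ← roots_charpoly_of_mem_diagTorus,
    UnitaryGroup.charpoly_eq_of_isConj ht]

theorem mem_diagTorus_of_commute {t : diagTorus n}
    (ht : Function.Injective (t : Matrix (Fin n) (Fin n) ℂ).diag) {g : U(n)}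
    (hg : Commute g t) : g ∈ diagTorus n :=
  isDiag_of_commute_diagonal ht <| by
    rw [(mem_diagTorus_iff.mp t.2).diagonal_diag]
    exact congrArg Subtype.val hg.eq

theorem exists_mem_diagTorus_isConj (u : U(n))
    (hu : (u : Matrix (Fin n) (Fin n) ℂ).charpoly.roots.Nodup) :
    ∃ t : diagTorus n, IsConj (t : U(n)) u := by
  obtain ⟨g, d, hgd⟩ := UnitaryGroup.exists_mul_eq_mul_diagonal u hu
  have hconj : ((g⁻¹ * u * g : U(n)) : Matrix (Fin n) (Fin n) ℂ) = diagonal d := by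
    rw [UnitaryGroup.mul_val, UnitaryGroup.mul_val, UnitaryGroup.inv_val, mul_assoc, hgd,
      ← mul_assoc, UnitaryGroup.star_mul_self, one_mul]
  exact ⟨⟨g⁻¹ * u * g, by rw [mem_diagTorus_iff, hconj]; exact isDiag_diagonal d⟩,
    isConj_iff.mpr ⟨g, by group⟩⟩

theorem map_diag_eq_of_isConj {t s : diagTorus n} (h : IsConj (t : U(n)) s) :
    Finset.univ.val.map (t : Matrix (Fin n) (Fin n) ℂ).diag =
      Finset.univ.val.map (s : Matrix (Fin n) (Fin n) ℂ).diag := by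
  rw [← roots_charpoly_of_mem_diagTorus, ← roots_charpoly_of_mem_diagTorus,
    UnitaryGroup.charpoly_eq_of_isConj h]

theorem card_isConj_eq_factorial (u : U(n))
    (hu : (u : Matrix (Fin n) (Fin n) ℂ).charpoly.roots.Nodup) :
    Nat.card {t : diagTorus n // IsConj (t : U(n)) u} = n.factorial := by
  obtain ⟨t₀, ht₀⟩ := exists_mem_diagTorus_isConj u hu
  set d := (t₀ : Matrix (Fin n) (Fin n) ℂ).diag
  have hd : Function.Injective d := injective_diag_of_isConj hu ht₀
  have hw (σ : Equiv.Perm (Fin n)) := coe_permUnitary_mul_mul_inv σ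
    (mem_diagTorus_iff.mp t₀.2).diagonal_diag.symm
  let f (σ : Equiv.Perm (Fin n)) : {t : diagTorus n // IsConj (t : U(n)) u} :=
    ⟨⟨permUnitary σ * (t₀ : U(n)) * (permUnitary σ)⁻¹, by
      rw [mem_diagTorus_iff, hw]; exact isDiag_diagonal _⟩,
      (isConj_iff.mpr ⟨permUnitary σ, rfl⟩).symm.trans ht₀⟩
  have hf (σ : Equiv.Perm (Fin n)) :
      ((f σ : diagTorus n) : Matrix (Fin n) (Fin n) ℂ) = diagonal (d ∘ σ) :=
    hw σ
  have hf_inj : Function.Injective f := fun σ τ h =>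
    Equiv.coe_fn_injective <| hd.comp_left <| diagonal_injective <| by
      rw [← hf, ← hf, h]
  have hf_surj : Function.Surjective f := by
    rintro ⟨t, ht⟩
    obtain ⟨σ, hσ⟩ :=
      exists_perm_eq_comp_of_map_univ_eq hd (map_diag_eq_of_isConj (ht.trans ht₀.symm))
    refine ⟨σ, Subtype.ext <| Subtype.ext <| Subtype.ext ?_⟩
    rw [hf, ← hσ, (mem_diagTorus_iff.mp t.2).diagonal_diag]
  rw [← Nat.card_congr (Equiv.ofBijective f ⟨hf_inj, hf_surj⟩), Nat.card_perm, Nat.card_fin]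

end DiagTorus

theorem weyl_covering_unitaryGroup_general (n : ℕ)
    (u : Matrix.unitaryGroup (Fin n) ℂ)
    (hu : ((u : Matrix (Fin n) (Fin n) ℂ).charpoly.roots).Nodup) :
    Nat.card {p : (Matrix.unitaryGroup (Fin n) ℂ ⧸ diagTorus n) × diagTorus n |
      ∃ g : Matrix.unitaryGroup (Fin n) ℂ,
        (g : Matrix.unitaryGroup (Fin n) ℂ ⧸ diagTorus n) = p.1 ∧ g * p.2 * g⁻¹ = u} =
      n.factorial := by
  rw [← card_isConj_eq_factorial u hu]
  exact card_conjFiber_eq_card_isConj (diagTorus n) u fun t ht _ hg =>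
    mem_diagTorus_of_commute (injective_diag_of_isConj hu ht) hg

/-- **Weyl's covering theorem for `U(n)`**: if `u ∈ U(n)` has pairwise distinct eigenvalues
(i.e. the roots of its characteristic polynomial have no repetition), then the fiber over `u`
of the map `(gT, t) ↦ g t g⁻¹` from `(U(n)/T) × T` to `U(n)` — which is independent of the
chosen representative `g` of the coset `gT` — has exactly `n!` elements. -/
theorem weyl_covering_unitaryGroup (n : ℕ) (hn : 1 ≤ n)
    (u : Matrix.unitaryGroup (Fin n) ℂ)
    (hu : ((u : Matrix (Fin n) (Fin n) ℂ).charpoly.roots).Nodup) :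
    Nat.card {p : (Matrix.unitaryGroup (Fin n) ℂ ⧸ diagTorus n) × diagTorus n |
      ∃ g : Matrix.unitaryGroup (Fin n) ℂ,
        (g : Matrix.unitaryGroup (Fin n) ℂ ⧸ diagTorus n) = p.1 ∧ g * p.2 * g⁻¹ = u} =
      n.factorial :=
  weyl_covering_unitaryGroup_general n u hu
end
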